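/- Define v̄₂ = (q₂/c)·(R₂−1)(R₂−R₃)/(R₂(R₂−R₃+R₃q₃/r₃)), v̄₃ = (q₃/q₂)·(R₂/(R₂−R₃))·v̄₂, ȳ₂ = (c/q₂)·v̄₂, and ȳ₃ = (c/r₃)·(R₃/R₂)·v̄₃. Then, provided R₂ ≠ R₃ and R₂ − R₃ + R₃q₃/r₃ ≠ 0, the point X₂ = (0, ȳ₂, ȳ₃, 0, v̄₂, v̄₃) satisfies F(X₂) = 0. Moreover, if R₂ > 1 and R₂ > R₃, then all four quantities ȳ₂, ȳ₃, v̄₂, v̄₃ are positive. -/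
import Mathlib


/-- The HBV three-strain vector field `F(y₁,y₂,y₃,v₁,v₂,v₃)`, with `β = 1 − y₁ − y₂ − y₃`. -/
noncomputable def Fhbv (α₁ α₂ α₃ δ₁ δ₂ δ₃ c p₁ p₂ q₂ q₃ r₃ : ℝ) (x : Fin 6 → ℝ) :
    Fin 6 → ℝ :=
  ![α₁ * (1 - x 0 - x 1 - x 2) * x 3 - δ₁ * x 0,
    α₂ * (1 - x 0 - x 1 - x 2) * x 4 - δ₂ * x 1,
    α₃ * (1 - x 0 - x 1 - x 2) * x 5 - δ₃ * x 2,
    p₁ * x 0 - c * x 3,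
    p₂ * x 0 + q₂ * x 1 - c * x 4,
    q₃ * x 1 + r₃ * x 2 - c * x 5]

set_option maxHeartbeats 1600000 in
lemma hbv_aux (α₁ α₂ α₃ δ₁ δ₂ δ₃ c p₁ p₂ q₂ q₃ r₃ R₂ R₃ : ℝ)
    (hc : c ≠ 0) (hq₂ : q₂ ≠ 0) (hr₃ : r₃ ≠ 0)
    (hα₂' : α₂ = R₂ * c * δ₂ / q₂) (hα₃' : α₃ = R₃ * c * δ₃ / r₃)
    (hR₂ : R₂ ≠ 0) (hR₃ : R₃ ≠ 0) (hsub : R₂ - R₃ ≠ 0)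
    (hD : R₂ - R₃ + R₃ * q₃ / r₃ ≠ 0) :
    Fhbv α₁ α₂ α₃ δ₁ δ₂ δ₃ c p₁ p₂ q₂ q₃ r₃
      ![0, (c / q₂) * ((q₂ / c) * ((R₂ - 1) * (R₂ - R₃) / (R₂ * (R₂ - R₃ + R₃ * q₃ / r₃)))), (c / r₃) * (R₃ / R₂) * ((q₃ / q₂) * (R₂ / (R₂ - R₃)) * ((q₂ / c) * ((R₂ - 1) * (R₂ - R₃) / (R₂ * (R₂ - R₃ + R₃ * q₃ / r₃))))), 0, (q₂ / c) * ((R₂ - 1) * (R₂ - R₃) / (R₂ * (R₂ - R₃ + R₃ * q₃ / r₃))), (q₃ / q₂) * (R₂ / (R₂ - R₃)) * ((q₂ / c) * ((R₂ - 1) * (R₂ - R₃) / (R₂ * (R₂ - R₃ + R₃ * q₃ / r₃))))] = 0 := by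
  have hDeq : R₂ - R₃ + R₃ * q₃ / r₃ = ((R₂ - R₃) * r₃ + R₃ * q₃) / r₃ := by
    field_simp
  have hE : (R₂ - R₃) * r₃ + R₃ * q₃ ≠ 0 := by
    intro h
    apply hD
    rw [hDeq, h, zero_div]
  have h0 : α₁ * (1 - 0 - (c / q₂) * ((q₂ / c) * ((R₂ - 1) * (R₂ - R₃) / (R₂ * (R₂ - R₃ + R₃ * q₃ / r₃)))) - (c / r₃) * (R₃ / R₂) * ((q₃ / q₂) * (R₂ / (R₂ - R₃)) * ((q₂ / c) * ((R₂ - 1) * (R₂ - R₃) / (R₂ * (R₂ - R₃ + R₃ * q₃ / r₃)))))) * 0 - δ₁ * 0 = (0:ℝ) := by ring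
  have h1 : α₂ * (1 - 0 - (c / q₂) * ((q₂ / c) * ((R₂ - 1) * (R₂ - R₃) / (R₂ * (R₂ - R₃ + R₃ * q₃ / r₃)))) - (c / r₃) * (R₃ / R₂) * ((q₃ / q₂) * (R₂ / (R₂ - R₃)) * ((q₂ / c) * ((R₂ - 1) * (R₂ - R₃) / (R₂ * (R₂ - R₃ + R₃ * q₃ / r₃)))))) * ((q₂ / c) * ((R₂ - 1) * (R₂ - R₃) / (R₂ * (R₂ - R₃ + R₃ * q₃ / r₃)))) - δ₂ * ((c / q₂) * ((q₂ / c) * ((R₂ - 1) * (R₂ - R₃) / (R₂ * (R₂ - R₃ + R₃ * q₃ / r₃))))) = (0:ℝ) := by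
    rw [hDeq, hα₂']
    set E := (R₂ - R₃) * r₃ + R₃ * q₃ with hEdef
    clear_value E
    field_simp
    rw [hEdef]
    ring
  have h2 : α₃ * (1 - 0 - (c / q₂) * ((q₂ / c) * ((R₂ - 1) * (R₂ - R₃) / (R₂ * (R₂ - R₃ + R₃ * q₃ / r₃)))) - (c / r₃) * (R₃ / R₂) * ((q₃ / q₂) * (R₂ / (R₂ - R₃)) * ((q₂ / c) * ((R₂ - 1) * (R₂ - R₃) / (R₂ * (R₂ - R₃ + R₃ * q₃ / r₃)))))) * ((q₃ / q₂) * (R₂ / (R₂ - R₃)) * ((q₂ / c) * ((R₂ - 1) * (R₂ - R₃) / (R₂ * (R₂ - R₃ + R₃ * q₃ / r₃))))) - δ₃ * ((c / r₃) * (R₃ / R₂) * ((q₃ / q₂) * (R₂ / (R₂ - R₃)) * ((q₂ / c) * ((R₂ - 1) * (R₂ - R₃) / (R₂ * (R₂ - R₃ + R₃ * q₃ / r₃)))))) = (0:ℝ) := by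
    rw [hDeq, hα₃']
    set E := (R₂ - R₃) * r₃ + R₃ * q₃ with hEdef
    clear_value E
    field_simp
    rw [hEdef]
    ring
  have h3 : p₁ * 0 - c * 0 = (0:ℝ) := by ring
  have h4 : p₂ * 0 + q₂ * ((c / q₂) * ((q₂ / c) * ((R₂ - 1) * (R₂ - R₃) / (R₂ * (R₂ - R₃ + R₃ * q₃ / r₃))))) - c * ((q₂ / c) * ((R₂ - 1) * (R₂ - R₃) / (R₂ * (R₂ - R₃ + R₃ * q₃ / r₃)))) = (0:ℝ) := by
    rw [hDeq]
    set E := (R₂ - R₃) * r₃ + R₃ * q₃ with hEdef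
    clear_value E
    field_simp
    ring
  have h5 : q₃ * ((c / q₂) * ((q₂ / c) * ((R₂ - 1) * (R₂ - R₃) / (R₂ * (R₂ - R₃ + R₃ * q₃ / r₃))))) + r₃ * ((c / r₃) * (R₃ / R₂) * ((q₃ / q₂) * (R₂ / (R₂ - R₃)) * ((q₂ / c) * ((R₂ - 1) * (R₂ - R₃) / (R₂ * (R₂ - R₃ + R₃ * q₃ / r₃)))))) - c * ((q₃ / q₂) * (R₂ / (R₂ - R₃)) * ((q₂ / c) * ((R₂ - 1) * (R₂ - R₃) / (R₂ * (R₂ - R₃ + R₃ * q₃ / r₃))))) = (0:ℝ) := by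
    rw [hDeq]
    set E := (R₂ - R₃) * r₃ + R₃ * q₃ with hEdef
    clear_value E
    field_simp
    ring
  funext i
  fin_cases i
  · exact h0
  · exact h1
  · exact h2
  · exact h3
  · exact h4
  · exact h5

/-- with v̄₂, v̄₃, ȳ₂, ȳ₃ defined as stated, provided R₂ ≠ R₃ and
R₂ − R₃ + R₃q₃/r₃ ≠ 0, the point X₂ = (0, ȳ₂, ȳ₃, 0, v̄₂, v̄₃) satisfies F(X₂) = 0;
moreover if R₂ > 1 and R₂ > R₃ then ȳ₂, ȳ₃, v̄₂, v̄₃ are all positive. -/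
theorem stmt_6 (α₁ α₂ α₃ δ₁ δ₂ δ₃ c p₁ p₂ q₂ q₃ r₃ : ℝ)
    (hα₁ : 0 < α₁) (hα₂ : 0 < α₂) (hα₃ : 0 < α₃)
    (hδ₁ : 0 < δ₁) (hδ₂ : 0 < δ₂) (hδ₃ : 0 < δ₃) (hc : 0 < c)
    (hp₁ : 0 < p₁) (hp₂ : 0 < p₂) (hq₂ : 0 < q₂) (hq₃ : 0 < q₃) (hr₃ : 0 < r₃) :
    let R₂ : ℝ := α₂ * q₂ / (c * δ₂)
    let R₃ : ℝ := α₃ * r₃ / (c * δ₃)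
    let v₂ : ℝ := (q₂ / c) * ((R₂ - 1) * (R₂ - R₃) / (R₂ * (R₂ - R₃ + R₃ * q₃ / r₃)))
    let v₃ : ℝ := (q₃ / q₂) * (R₂ / (R₂ - R₃)) * v₂
    let y₂ : ℝ := (c / q₂) * v₂
    let y₃ : ℝ := (c / r₃) * (R₃ / R₂) * v₃
    (R₂ ≠ R₃ → R₂ - R₃ + R₃ * q₃ / r₃ ≠ 0 →
        Fhbv α₁ α₂ α₃ δ₁ δ₂ δ₃ c p₁ p₂ q₂ q₃ r₃ ![0, y₂, y₃, 0, v₂, v₃] = 0) ∧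
      (1 < R₂ → R₃ < R₂ → 0 < y₂ ∧ 0 < y₃ ∧ 0 < v₂ ∧ 0 < v₃) := by
  intro R₂ R₃ v₂ v₃ y₂ y₃
  have hR₂ : R₂ > 0 := div_pos (by positivity) (by positivity)
  have hR₃ : R₃ > 0 := div_pos (by positivity) (by positivity)
  constructor
  · intro hne hD
    have hα₂' : α₂ = R₂ * c * δ₂ / q₂ := by
      show _ = α₂ * q₂ / (c * δ₂) * c * δ₂ / q₂
      field_simp
    have hα₃' : α₃ = R₃ * c * δ₃ / r₃ := by
      show _ = α₃ * r₃ / (c * δ₃) * c * δ₃ / r₃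
      field_simp
    exact hbv_aux α₁ α₂ α₃ δ₁ δ₂ δ₃ c p₁ p₂ q₂ q₃ r₃ R₂ R₃ hc.ne' hq₂.ne' hr₃.ne'
      hα₂' hα₃' hR₂.ne' hR₃.ne' (sub_ne_zero.mpr hne) hD
  · intro h1 h23
    have hsub : (0:ℝ) < R₂ - R₃ := sub_pos.mpr h23
    have hD : (0:ℝ) < R₂ - R₃ + R₃ * q₃ / r₃ := by positivity
    have hv₂ : 0 < v₂ := by
      have h : (0:ℝ) < (R₂ - 1) * (R₂ - R₃) / (R₂ * (R₂ - R₃ + R₃ * q₃ / r₃)) :=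
        div_pos (mul_pos (by linarith) hsub) (mul_pos hR₂ hD)
      exact mul_pos (div_pos hq₂ hc) h
    have hv₃ : 0 < v₃ :=
      mul_pos (mul_pos (div_pos hq₃ hq₂) (div_pos hR₂ hsub)) hv₂
    exact ⟨mul_pos (div_pos hc hq₂) hv₂,
      mul_pos (mul_pos (div_pos hc hr₃) (div_pos hR₃ hR₂)) hv₃, hv₂, hv₃⟩
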